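/- For system (B), the straight line y − 1 = 0 is an invariant algebraic curve if and only if ℓ = 0; moreover, when ℓ = 0 the polynomial identity p·∂f₁/∂x + q·∂f₁/∂y = K₁·f₁ holds with f₁(x,y) = y − 1 and cofactor K₁(x,y) = −2x. -/
import Mathlib


open MvPolynomial

/-- Right-hand side p of system (B). -/
noncomputable def pB (g u : ℝ) : MvPolynomial (Fin 2) ℝ :=
  C (-2 * g * u) * X 0 + C (g * (1 + u ^ 2)) * X 1 + C g * X 0 ^ 2

/-- Right-hand side q of system (B). -/
noncomputable def qB (u ℓ : ℝ) : MvPolynomial (Fin 2) ℝ :=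
  C (-2 * (ℓ * u - 1)) * X 0 + C (ℓ * (1 + u ^ 2)) * X 1 + C ℓ * X 0 ^ 2
    - C 2 * X 0 * X 1

lemma der0 : pderiv 0 (X 1 - 1 : MvPolynomial (Fin 2) ℝ) = 0 := by
  rw [map_sub]
  simp [pderiv_X]

lemma der1 : pderiv 1 (X 1 - 1 : MvPolynomial (Fin 2) ℝ) = 1 := by
  rw [map_sub]
  simp [pderiv_X]

lemma qB_zero (u : ℝ) :
    qB u 0 = (C (-2) * X 0) * (X 1 - 1) := by
  simp only [qB]
  ring_nf
  simp [C_0, C_neg]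
  ring

/-- For system (B), the straight line `y - 1 = 0` is an invariant algebraic curve
if and only if `ℓ = 0`; moreover when `ℓ = 0` the identity holds with cofactor
`K₁ = -2x`. -/
theorem invariant_line_y_eq_one_sysB (g u ℓ : ℝ) (hg : g ≠ 0) :
    ((∃ K : MvPolynomial (Fin 2) ℝ,
        pB g u * pderiv 0 (X 1 - 1 : MvPolynomial (Fin 2) ℝ)
          + qB u ℓ * pderiv 1 (X 1 - 1 : MvPolynomial (Fin 2) ℝ)
          = K * (X 1 - 1)) ↔ ℓ = 0) ∧
    (ℓ = 0 →
      pB g u * pderiv 0 (X 1 - 1 : MvPolynomial (Fin 2) ℝ)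
        + qB u ℓ * pderiv 1 (X 1 - 1 : MvPolynomial (Fin 2) ℝ)
        = (C (-2) * X 0) * (X 1 - 1)) := by
  rw [der0, der1]
  simp only [mul_zero, zero_add, mul_one]
  constructor
  · constructor
    · rintro ⟨K, hK⟩
      have h := congrArg (eval (fun i : Fin 2 => if i = 0 then (0:ℝ) else 1)) hK
      simp [qB] at h
      rcases h with h | h
      · exact h
      · nlinarith [sq_nonneg u]
    · intro hℓ
      subst hℓ
      exact ⟨C (-2) * X 0, qB_zero u⟩
  · intro hℓ
    subst hℓ
    exact qB_zero u
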